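/- (Sufficient condition for parsimony.) Let s : P⊗C₀ → T⊗C₀ be a simulator in a target–context category and let r* : s → id be a lax reduction (r : T → P functional, s∘(r⊗id_{C₀}) ⪰ id_{T⊗C₀}) which is also an oplax reduction (id_{T⊗C₀} ⪰ s∘(r⊗id_{C₀})). If there exists a functional morphism m : P → T satisfying s∘((r∘m)⊗id_{C₀}) = s, then there exists a simulator morphism id → s from the trivial simulator to s; i.e. s is more parsimonious than the trivial simulator. -/

import Mathlib

open CategoryTheory MonoidalCategory

universe w v u v' u'

/-- A gs-monoidal category: a symmetric monoidal category in which every object carries a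
commutative comonoid structure (copy and discard), compatible with tensor products. -/
class GSCat (C : Type u) [Category.{v} C] [MonoidalCategory C] [SymmetricCategory C] where
  copy : ∀ A : C, A ⟶ A ⊗ A
  discard : ∀ A : C, A ⟶ 𝟙_ C
  copy_assoc : ∀ A : C, copy A ≫ (copy A ▷ A) ≫ (α_ A A A).hom = copy A ≫ (A ◁ copy A)
  copy_comm : ∀ A : C, copy A ≫ (β_ A A).hom = copy A
  copy_counit_left : ∀ A : C, copy A ≫ (discard A ▷ A) ≫ (λ_ A).hom = 𝟙 A
  copy_counit_right : ∀ A : C, copy A ≫ (A ◁ discard A) ≫ (ρ_ A).hom = 𝟙 A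
  copy_tensor : ∀ A X : C, copy (A ⊗ X) = (copy A ⊗ₘ copy X) ≫ tensorμ A A X X
  discard_tensor : ∀ A X : C, discard (A ⊗ X) = (discard A ⊗ₘ discard X) ≫ (λ_ (𝟙_ C)).hom
  discard_unit : discard (𝟙_ C) = 𝟙 (𝟙_ C)

variable {C : Type u} [Category.{v} C] [MonoidalCategory C] [SymmetricCategory C] [GSCat C]

/-- The domain `dom(f) = ρ_A ∘ (id_A ⊗ (ε_X ∘ f)) ∘ Δ_A` of a morphism `f : A ⟶ X`. -/
def gsDom {A X : C} (f : A ⟶ X) : A ⟶ A :=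
  GSCat.copy A ≫ (A ◁ (f ≫ GSCat.discard X)) ≫ (ρ_ A).hom

/-- A morphism is normalized if `f ∘ dom(f) = f`. -/
def GsNormalized {A X : C} (f : A ⟶ X) : Prop := gsDom f ≫ f = f

/-- A morphism is functional if `Δ_X ∘ f = (f ⊗ f) ∘ Δ_A`. -/
def GsFunctional {A X : C} (f : A ⟶ X) : Prop :=
  f ≫ GSCat.copy X = GSCat.copy A ≫ (f ⊗ₘ f)

/-- A morphism is total if `ε_X ∘ f = ε_A`. -/
def GsTotal {A X : C} (f : A ⟶ X) : Prop := f ≫ GSCat.discard X = GSCat.discard A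

/-- `f ⊒ g` : `f` agrees with `g` on the domain of `g`, i.e. `f ∘ dom(g) = g`. -/
def GsRestrict {A X : C} (f g : A ⟶ X) : Prop := gsDom g ≫ f = g

/-- A gs-monoidal category is normalized if all of its morphisms are normalized. -/
class GsNormalizedCat (C : Type u) [Category.{v} C] [MonoidalCategory C]
    [SymmetricCategory C] [GSCat C] : Prop where
  norm : ∀ {A X : C} (f : A ⟶ X), GsNormalized f

/-- A target--context category: a (normalized) gs-monoidal category with distinguished
objects `T` (targets) and `C0` (contexts) together with an ambient preorder on each
hom-set into `T ⊗ C0`, containing the restriction order and preserved by precomposition. -/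
structure TCC (C : Type u) [Category.{v} C] [MonoidalCategory C] [SymmetricCategory C]
    [GSCat C] (T C0 : C) where
  amb : ∀ {A : C}, (A ⟶ T ⊗ C0) → (A ⟶ T ⊗ C0) → Prop
  amb_refl : ∀ {A : C} (f : A ⟶ T ⊗ C0), amb f f
  amb_trans : ∀ {A : C} {f g h : A ⟶ T ⊗ C0}, amb f g → amb g h → amb f h
  amb_of_restrict : ∀ {A : C} {f g : A ⟶ T ⊗ C0}, GsRestrict f g → amb f g
  amb_precomp : ∀ {A Z : C} {f g : A ⟶ T ⊗ C0} (h : Z ⟶ A), amb f g → amb (h ≫ f) (h ≫ g)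

/-- A simulator: a morphism `s : P ⊗ C0 ⟶ T ⊗ C0` of the form
`s = (s_T ⊗ s_C) ∘ (Δ_P ⊗ id)` with functional compiler `s_T : P ⟶ T` and
context reduction `s_C : P ⊗ C0 ⟶ C0`. -/
structure Simulator {C : Type u} [Category.{v} C] [MonoidalCategory C] [SymmetricCategory C]
    [GSCat C] (T C0 P : C) where
  s : P ⊗ C0 ⟶ T ⊗ C0
  sT : P ⟶ T
  sC : P ⊗ C0 ⟶ C0
  sT_functional : GsFunctional sT
  split : s = (GSCat.copy P ▷ C0) ≫ (α_ P P C0).hom ≫ (sT ⊗ₘ sC)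

/-- A processing with programs `P`: a morphism `q : P ⊗ (T ⊗ C0) ⟶ T ⊗ C0` that splits as a
simulator with programs `P ⊗ T` and is behaviorally dominated by discarding `P`. -/
structure Processing {T C0 : C} (𝒯 : TCC C T C0) (P : C) where
  q : P ⊗ (T ⊗ C0) ⟶ T ⊗ C0
  qT : P ⊗ T ⟶ T
  qC : (P ⊗ T) ⊗ C0 ⟶ C0
  qT_functional : GsFunctional qT
  split : q = (α_ P T C0).inv ≫ (GSCat.copy (P ⊗ T) ▷ C0) ≫
      (α_ (P ⊗ T) (P ⊗ T) C0).hom ≫ (qT ⊗ₘ qC)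
  weak : 𝒯.amb ((GSCat.discard P ▷ (T ⊗ C0)) ≫ (λ_ (T ⊗ C0)).hom) q

/-- A simulator morphism `s → s'` : a reduction `r : P' ⟶ P` (giving the pulled-back
simulator `r*s := s ∘ (r ⊗ id)`) together with a processing `q` mapping `r*s` to `s'`,
i.e. `s' = q ∘ (id ⊗ r*s) ∘ (Δ ⊗ id)`. -/
structure SimMor {T C0 : C} (𝒯 : TCC C T C0) {P P' : C}
    (s : Simulator T C0 P) (s' : Simulator T C0 P') where
  r : P' ⟶ P
  r_functional : GsFunctional r
  proc : Processing 𝒯 P'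
  hit : (GSCat.copy P' ▷ C0) ≫ (α_ P' P' C0).hom ≫
      (P' ◁ ((r ▷ C0) ≫ s.s)) ≫ proc.q = s'.s

/-! The reduction is `m : P ⟶ T`, and the processing ignores its program argument and runs the
pulled-back simulator `r*s` on the target: `q(p, t, c) = s(r t, c)`. Precomposing the oplax
inequality `id ⪰ r*s` with the projection that discards the program shows that `q` is dominated
by discarding the program, and feeding `q` the program `p` together with the target `m p`
returns `s(r (m p), c) = s(p, c)`. -/

namespace GSCat

lemma copy_discard_whiskerRight (A : C) : copy A ≫ (discard A ▷ A) = (λ_ A).inv := by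
  rw [← Iso.comp_hom_eq_id, Category.assoc, copy_counit_left]

lemma copy_whiskerLeft_discard (A : C) : copy A ≫ (A ◁ discard A) = (ρ_ A).inv := by
  rw [← Iso.comp_hom_eq_id, Category.assoc, copy_counit_right]

lemma copy_unit : copy (𝟙_ C) = (λ_ (𝟙_ C)).inv := by
  simpa [discard_unit] using copy_discard_whiskerRight (C := C) (𝟙_ C)

end GSCat

open GSCat

lemma gsFunctional_id (A : C) : GsFunctional (𝟙 A) := by
  simp [GsFunctional]

lemma GsFunctional.comp {A B D : C} {f : A ⟶ B} {g : B ⟶ D}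
    (hf : GsFunctional f) (hg : GsFunctional g) : GsFunctional (f ≫ g) := by
  unfold GsFunctional at *
  rw [Category.assoc, hg, reassoc_of% hf, tensorHom_comp_tensorHom]

lemma GsFunctional.tensorHom {A B X Y : C} {f : A ⟶ B} {g : X ⟶ Y}
    (hf : GsFunctional f) (hg : GsFunctional g) : GsFunctional (f ⊗ₘ g) := by
  unfold GsFunctional at *
  rw [copy_tensor, copy_tensor, reassoc_of% tensorHom_comp_tensorHom, hf, hg,
    ← tensorHom_comp_tensorHom, Category.assoc, tensorμ_natural, Category.assoc]

lemma gsFunctional_discard (A : C) : GsFunctional (discard A) := by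
  rw [GsFunctional, copy_unit, tensorHom_def', reassoc_of% copy_whiskerLeft_discard,
    unitors_inv_equal, rightUnitor_inv_naturality]

lemma gsFunctional_leftUnitor_hom (A : C) : GsFunctional (λ_ A).hom := by
  rw [GsFunctional, copy_tensor, copy_unit, tensorHom_def', Category.assoc, Category.assoc,
    ← tensor_left_unitality, leftUnitor_naturality]

def gsSnd (A B : C) : A ⊗ B ⟶ B := (discard A ▷ B) ≫ (λ_ B).hom

lemma gsFunctional_gsSnd (A B : C) : GsFunctional (gsSnd A B) := by
  rw [gsSnd, ← tensorHom_id]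
  exact ((gsFunctional_discard A).tensorHom (gsFunctional_id B)).comp
    (gsFunctional_leftUnitor_hom B)

lemma copy_whiskerLeft_gsSnd {A B : C} (f : A ⟶ B) : copy A ≫ (A ◁ f) ≫ gsSnd A B = f := by
  rw [gsSnd, whisker_exchange_assoc, reassoc_of% copy_discard_whiskerRight,
    leftUnitor_naturality, Iso.inv_hom_id_assoc]

lemma associator_inv_gsSnd_whiskerRight (A B X : C) :
    (α_ A B X).inv ≫ (gsSnd A B ▷ X) = gsSnd A (B ⊗ X) := by
  rw [gsSnd, gsSnd, comp_whiskerRight, leftUnitor_tensor_hom,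
    associator_inv_naturality_left_assoc]

namespace Simulator

variable {T C0 P : C}

def pullback {Q : C} (s : Simulator T C0 P) (h : Q ⟶ P) (hh : GsFunctional h) :
    Simulator T C0 Q where
  s := (h ▷ C0) ≫ s.s
  sT := h ≫ s.sT
  sC := (h ▷ C0) ≫ s.sC
  sT_functional := hh.comp s.sT_functional
  split := by
    rw [s.split, ← comp_whiskerRight_assoc, hh, comp_whiskerRight_assoc,
      ← tensorHom_id (h ⊗ₘ h), associator_naturality_assoc, tensorHom_comp_tensorHom,
      tensorHom_id]

variable (T C0) in
def trivial : Simulator T C0 T where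
  s := 𝟙 (T ⊗ C0)
  sT := 𝟙 T
  sC := (discard T ▷ C0) ≫ (λ_ C0).hom
  sT_functional := gsFunctional_id T
  split := by
    rw [id_tensorHom, MonoidalCategory.whiskerLeft_comp,
      ← associator_naturality_middle_assoc, MonoidalCategory.triangle,
      ← comp_whiskerRight_assoc, ← comp_whiskerRight, Category.assoc,
      copy_counit_right, id_whiskerRight]

end Simulator

namespace Processing

variable {T C0 : C} (𝒯 : TCC C T C0)

def ofSimulator {Q : C} (p : Simulator T C0 (Q ⊗ T))
    (weak : 𝒯.amb (gsSnd Q (T ⊗ C0)) ((α_ Q T C0).inv ≫ p.s)) : Processing 𝒯 Q where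
  q := (α_ Q T C0).inv ≫ p.s
  qT := p.sT
  qC := p.sC
  qT_functional := p.sT_functional
  split := by rw [p.split]
  weak := weak

def ofOplaxReduction {P : C} (s : Simulator T C0 P) {r : T ⟶ P} (hr : GsFunctional r)
    (hoplax : 𝒯.amb (𝟙 (T ⊗ C0)) ((r ▷ C0) ≫ s.s)) (Q : C) : Processing 𝒯 Q :=
  ofSimulator 𝒯 (s.pullback (gsSnd Q T ≫ r) ((gsFunctional_gsSnd Q T).comp hr)) <| by
    convert 𝒯.amb_precomp (gsSnd Q (T ⊗ C0)) hoplax using 1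
    · exact (Category.comp_id _).symm
    · simp only [Simulator.pullback, comp_whiskerRight, Category.assoc,
        reassoc_of% associator_inv_gsSnd_whiskerRight]

end Processing

theorem parsimony_sufficient_general {T C0 : C} (𝒯 : TCC C T C0) {P : C}
    (s : Simulator T C0 P) (r : T ⟶ P) (hr : GsFunctional r)
    (hoplax : 𝒯.amb (𝟙 (T ⊗ C0)) ((r ▷ C0) ≫ s.s))
    (m : P ⟶ T) (hm : GsFunctional m)
    (hinv : ((m ≫ r) ▷ C0) ≫ s.s = s.s) :
    ∃ triv : Simulator T C0 T, triv.s = 𝟙 (T ⊗ C0) ∧ triv.sT = 𝟙 T ∧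
      triv.sC = (GSCat.discard T ▷ C0) ≫ (λ_ C0).hom ∧
      Nonempty (SimMor 𝒯 triv s) := by
  refine ⟨Simulator.trivial T C0, rfl, rfl, rfl,
    ⟨⟨m, hm, Processing.ofOplaxReduction 𝒯 s hr hoplax P, ?_⟩⟩⟩
  calc (copy P ▷ C0) ≫ (α_ P P C0).hom ≫ (P ◁ ((m ▷ C0) ≫ 𝟙 (T ⊗ C0))) ≫
        (α_ P T C0).inv ≫ ((gsSnd P T ≫ r) ▷ C0) ≫ s.s
      = ((copy P ≫ (P ◁ m) ≫ gsSnd P T ≫ r) ▷ C0) ≫ s.s := by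
        simp only [Category.comp_id, associator_inv_naturality_middle_assoc,
          Iso.hom_inv_id_assoc, comp_whiskerRight, Category.assoc]
    _ = s.s := by rw [reassoc_of% copy_whiskerLeft_gsSnd, hinv]

/-- Sufficient condition for parsimony: if `r* : s → id` is a lax and oplax
reduction and there is a functional `m : P ⟶ T` with `s ∘ ((r ∘ m) ⊗ id) = s`, then there
is a simulator morphism from the trivial simulator (the identity on `T ⊗ C0`) to `s`. -/
theorem parsimony_sufficient [GsNormalizedCat C] {T C0 : C} (𝒯 : TCC C T C0) {P : C}
    (s : Simulator T C0 P) (r : T ⟶ P) (hr : GsFunctional r)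
    (hlax : 𝒯.amb ((r ▷ C0) ≫ s.s) (𝟙 (T ⊗ C0)))
    (hoplax : 𝒯.amb (𝟙 (T ⊗ C0)) ((r ▷ C0) ≫ s.s))
    (m : P ⟶ T) (hm : GsFunctional m)
    (hinv : ((m ≫ r) ▷ C0) ≫ s.s = s.s) :
    ∃ triv : Simulator T C0 T, triv.s = 𝟙 (T ⊗ C0) ∧ triv.sT = 𝟙 T ∧
      triv.sC = (GSCat.discard T ▷ C0) ≫ (λ_ C0).hom ∧
      Nonempty (SimMor 𝒯 triv s) :=
  parsimony_sufficient_general 𝒯 s r hr hoplax m hm hinv
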